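/- arXiv:1001.0133 — 3 statements merged into one kernel-verified Lean document; each statement's English description precedes it below -/
import Mathlib

section
/- Let Ξ, K, Π be invertible n×n complex matrices, U an m×n and V an n×m complex matrix, and assume Ξ⁻¹ − K Ξ K is invertible. Set Ξ' = Π Ξ⁻¹ Π⁻¹, K' = Π K⁻¹ Π⁻¹, U' = −U K⁻¹ Π⁻¹, V' = Π K⁻¹ V. Then Ξ'⁻¹ − K' Ξ' K' is invertible and the reflection transformation leaves the solution formulas invariant up to a constant: U' (Ξ'⁻¹ − K' Ξ' K')⁻¹ V' = U (Ξ⁻¹ − K Ξ K)⁻¹ V, and U' Ξ' K' (Ξ'⁻¹ − K' Ξ' K')⁻¹ V' = U Ξ K (Ξ⁻¹ − K Ξ K)⁻¹ V + U K⁻¹ V. -/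
/-!
Write `S = Ξ⁻¹ - K Ξ K`. Conjugation by `Π` commutes with inversion and
`Ξ - K⁻¹ Ξ⁻¹ K⁻¹ = -K⁻¹ S K⁻¹`, so the reflected denominator is
`-(Π K⁻¹) S (K⁻¹ Π⁻¹)`.
Its inverse `-(Π K) S⁻¹ (K Π⁻¹)` cancels against `U'` and `V'`, leaving `U S⁻¹ V` and
`U K⁻¹ Ξ⁻¹ S⁻¹ V`; the constant term comes from `K⁻¹ Ξ⁻¹ = K⁻¹ S + Ξ K`.
-/

open Matrix

namespace Matrix

variable {n α : Type*} [Fintype n] [DecidableEq n] [CommRing α]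

theorem inv_neg (A : Matrix n n α) : (-A)⁻¹ = -A⁻¹ := by
  have h : (-1 : Matrix n n α)⁻¹ = -1 := inv_eq_left_inv (by rw [neg_one_mul, neg_neg])
  rw [← neg_one_mul, mul_inv_rev, h, mul_neg_one]

theorem inv_conj {P : Matrix n n α} (hP : IsUnit P) (A : Matrix n n α) :
    (P * A * P⁻¹)⁻¹ = P * A⁻¹ * P⁻¹ := by
  rw [mul_inv_rev, mul_inv_rev, nonsing_inv_nonsing_inv _ ((isUnit_iff_isUnit_det P).mp hP),
    Matrix.mul_assoc]

theorem conj_sub_conj_mul_conj_mul_conj {P : Matrix n n α} (hP : IsUnit P)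
    (A B C : Matrix n n α) :
    P * A * P⁻¹ - P * B * P⁻¹ * (P * C * P⁻¹) * (P * B * P⁻¹)
      = P * (A - B * C * B) * P⁻¹ := by
  have := hP.invertible
  simp only [Matrix.mul_assoc, mul_sub, sub_mul, inv_mul_cancel_left_of_invertible]

theorem sub_inv_mul_mul_inv {K : Matrix n n α} (hK : IsUnit K) (A B : Matrix n n α) :
    B - K⁻¹ * A * K⁻¹ = K⁻¹ * (K * B * K - A) * K⁻¹ := by
  have := hK.invertible
  simp only [Matrix.mul_assoc, mul_sub, sub_mul, inv_mul_cancel_left_of_invertible,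
    mul_inv_of_invertible, Matrix.mul_one]

theorem inv_mul_mul_inv_sub {K A B : Matrix n n α} (hK : IsUnit K) (hS : IsUnit (A - K * B * K)) :
    K⁻¹ * A * (A - K * B * K)⁻¹ = B * K * (A - K * B * K)⁻¹ + K⁻¹ := by
  have := hK.invertible
  have := hS.invertible
  set S := A - K * B * K
  calc K⁻¹ * A * S⁻¹ = K⁻¹ * (S + K * B * K) * S⁻¹ := by rw [sub_add_cancel]
    _ = K⁻¹ + B * K * S⁻¹ := by
        simp only [Matrix.mul_add, Matrix.add_mul, Matrix.mul_assoc, mul_inv_of_invertible,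
          Matrix.mul_one, inv_mul_cancel_left_of_invertible]
    _ = _ := add_comm _ _

theorem reflection_denominator_eq {Ξ K P : Matrix n n α} (hΞ : IsUnit Ξ) (hK : IsUnit K)
    (hP : IsUnit P) :
    (P * Ξ⁻¹ * P⁻¹)⁻¹ - P * K⁻¹ * P⁻¹ * (P * Ξ⁻¹ * P⁻¹) * (P * K⁻¹ * P⁻¹)
      = P * K⁻¹ * -(Ξ⁻¹ - K * Ξ * K) * K⁻¹ * P⁻¹ := by
  rw [inv_conj hP, nonsing_inv_nonsing_inv _ ((isUnit_iff_isUnit_det Ξ).mp hΞ),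
    conj_sub_conj_mul_conj_mul_conj hP, sub_inv_mul_mul_inv hK, neg_sub]
  simp only [Matrix.mul_assoc]

end Matrix

/-- The reflection transformation leaves the solution formulas invariant
(up to an additive constant for the second one). -/
theorem reflection_symmetry_invariance
    {n m : ℕ}
    (Ξ K P : Matrix (Fin n) (Fin n) ℂ)
    (hΞ : IsUnit Ξ) (hK : IsUnit K) (hP : IsUnit P)
    (U : Matrix (Fin m) (Fin n) ℂ) (V : Matrix (Fin n) (Fin m) ℂ)
    (hinv : IsUnit (Ξ⁻¹ - K * Ξ * K))
    (Ξ' K' : Matrix (Fin n) (Fin n) ℂ)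
    (U' : Matrix (Fin m) (Fin n) ℂ) (V' : Matrix (Fin n) (Fin m) ℂ)
    (hΞ' : Ξ' = P * Ξ⁻¹ * P⁻¹)
    (hK' : K' = P * K⁻¹ * P⁻¹)
    (hU' : U' = -(U * K⁻¹ * P⁻¹))
    (hV' : V' = P * K⁻¹ * V) :
    IsUnit (Ξ'⁻¹ - K' * Ξ' * K') ∧
    U' * (Ξ'⁻¹ - K' * Ξ' * K')⁻¹ * V' = U * (Ξ⁻¹ - K * Ξ * K)⁻¹ * V ∧
    U' * Ξ' * K' * (Ξ'⁻¹ - K' * Ξ' * K')⁻¹ * V'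
      = U * Ξ * K * (Ξ⁻¹ - K * Ξ * K)⁻¹ * V + U * K⁻¹ * V := by
  subst hΞ' hK' hU' hV'
  have hS_inv_mul := inv_mul_mul_inv_sub hK hinv
  rw [reflection_denominator_eq hΞ hK hP]
  set S := Ξ⁻¹ - K * Ξ * K
  have := hK.invertible
  have := hP.invertible
  have hden_inv : (P * K⁻¹ * -S * K⁻¹ * P⁻¹)⁻¹ = P * K * -S⁻¹ * K * P⁻¹ := by
    simp only [Matrix.mul_inv_rev, Matrix.inv_neg, inv_inv_of_invertible, Matrix.mul_assoc]
  refine ⟨?_, ?_, ?_⟩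
  · have hKinv := isUnit_nonsing_inv_iff.mpr hK
    exact (((hP.mul hKinv).mul hinv.neg).mul hKinv).mul (isUnit_nonsing_inv_iff.mpr hP)
  · rw [hden_inv]
    simp only [Matrix.neg_mul, Matrix.mul_neg, neg_neg, Matrix.mul_assoc,
      inv_mul_cancel_left_of_invertible, mul_inv_cancel_left_of_invertible]
  · calc _ = U * (K⁻¹ * Ξ⁻¹ * S⁻¹) * V := by
          rw [hden_inv]
          simp only [Matrix.neg_mul, Matrix.mul_neg, neg_neg, Matrix.mul_assoc,
            inv_mul_cancel_left_of_invertible, mul_inv_cancel_left_of_invertible]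
      _ = _ := by
          rw [hS_inv_mul]
          simp only [Matrix.mul_add, Matrix.add_mul, Matrix.mul_assoc]
end

section
/- Let J be an m×m complex matrix with J² = I, and let 𝒰, 𝒟 : ℝ² → M_m(ℂ) be smooth with J 𝒟(x,t) = 𝒟(x,t) J and J 𝒰(x,t) = −𝒰(x,t) J for all (x,t) ∈ ℝ². Set φ = J (𝒟 + 𝒰). Then φ satisfies −(i/2) [J, φ_t] = φ_xx + (1/2) [φ_x, [J, φ]] on ℝ² if and only if both i J 𝒰_t + 𝒰_xx + 𝒟_x 𝒰 + 𝒰 𝒟_x = 0 and 𝒟_xx = −(𝒰²)_x hold on ℝ². -/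
open Matrix

attribute [local instance] Matrix.normedAddCommGroup Matrix.normedSpace

/-- Partial derivative with respect to the first (space) variable. -/
noncomputable def pdx {α : Type*} [NormedAddCommGroup α] [NormedSpace ℝ α]
    (f : ℝ → ℝ → α) : ℝ → ℝ → α :=
  fun x t => deriv (fun y => f y t) x

/-- Partial derivative with respect to the second (time) variable. -/
noncomputable def pdt {α : Type*} [NormedAddCommGroup α] [NormedSpace ℝ α]
    (f : ℝ → ℝ → α) : ℝ → ℝ → α :=
  fun x t => deriv (fun s => f x s) t

section PDlemmas
variable {α : Type*} [NormedAddCommGroup α] [NormedSpace ℝ α]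

lemma hasDerivAt_slice_x (f : ℝ → ℝ → α)
    (hf : ContDiff ℝ (⊤ : ℕ∞) (fun z : ℝ × ℝ => f z.1 z.2)) (x t : ℝ) :
    HasDerivAt (fun y => f y t)
      (fderiv ℝ (fun z : ℝ × ℝ => f z.1 z.2) (x, t) ((1 : ℝ), (0 : ℝ))) x := by
  have h1 : HasDerivAt (fun y : ℝ => (y, t)) ((1 : ℝ), (0 : ℝ)) x :=
    (hasDerivAt_id x).prodMk (hasDerivAt_const x t)
  exact ((hf.differentiable (by simp) (x, t)).hasFDerivAt).comp_hasDerivAt x h1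

lemma hasDerivAt_slice_t (f : ℝ → ℝ → α)
    (hf : ContDiff ℝ (⊤ : ℕ∞) (fun z : ℝ × ℝ => f z.1 z.2)) (x t : ℝ) :
    HasDerivAt (fun s => f x s)
      (fderiv ℝ (fun z : ℝ × ℝ => f z.1 z.2) (x, t) ((0 : ℝ), (1 : ℝ))) t := by
  have h1 : HasDerivAt (fun s : ℝ => (x, s)) ((0 : ℝ), (1 : ℝ)) t :=
    (hasDerivAt_const t x).prodMk (hasDerivAt_id t)
  exact ((hf.differentiable (by simp) (x, t)).hasFDerivAt).comp_hasDerivAt t h1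

lemma pdx_eq_fderiv (f : ℝ → ℝ → α)
    (hf : ContDiff ℝ (⊤ : ℕ∞) (fun z : ℝ × ℝ => f z.1 z.2)) (x t : ℝ) :
    pdx f x t = fderiv ℝ (fun z : ℝ × ℝ => f z.1 z.2) (x, t) ((1 : ℝ), (0 : ℝ)) :=
  (hasDerivAt_slice_x f hf x t).deriv

lemma pdt_eq_fderiv (f : ℝ → ℝ → α)
    (hf : ContDiff ℝ (⊤ : ℕ∞) (fun z : ℝ × ℝ => f z.1 z.2)) (x t : ℝ) :
    pdt f x t = fderiv ℝ (fun z : ℝ × ℝ => f z.1 z.2) (x, t) ((0 : ℝ), (1 : ℝ)) :=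
  (hasDerivAt_slice_t f hf x t).deriv

lemma hasDerivAt_pdx (f : ℝ → ℝ → α)
    (hf : ContDiff ℝ (⊤ : ℕ∞) (fun z : ℝ × ℝ => f z.1 z.2)) (x t : ℝ) :
    HasDerivAt (fun y => f y t) (pdx f x t) x := by
  rw [pdx_eq_fderiv f hf x t]; exact hasDerivAt_slice_x f hf x t

lemma hasDerivAt_pdt (f : ℝ → ℝ → α)
    (hf : ContDiff ℝ (⊤ : ℕ∞) (fun z : ℝ × ℝ => f z.1 z.2)) (x t : ℝ) :
    HasDerivAt (fun s => f x s) (pdt f x t) t := by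
  rw [pdt_eq_fderiv f hf x t]; exact hasDerivAt_slice_t f hf x t

lemma contDiff_pdx (f : ℝ → ℝ → α)
    (hf : ContDiff ℝ (⊤ : ℕ∞) (fun z : ℝ × ℝ => f z.1 z.2)) :
    ContDiff ℝ (⊤ : ℕ∞) (fun z : ℝ × ℝ => pdx f z.1 z.2) := by
  have h1 : ContDiff ℝ (⊤ : ℕ∞) (fun z : ℝ × ℝ =>
      fderiv ℝ (fun w : ℝ × ℝ => f w.1 w.2) z ((1 : ℝ), (0 : ℝ))) :=
    (hf.fderiv_right (by simp)).clm_apply contDiff_const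
  have h2 : (fun z : ℝ × ℝ => pdx f z.1 z.2)
      = fun z : ℝ × ℝ => fderiv ℝ (fun w : ℝ × ℝ => f w.1 w.2) z ((1 : ℝ), (0 : ℝ)) := by
    funext z
    exact pdx_eq_fderiv f hf z.1 z.2
  rw [h2]; exact h1

end PDlemmas

noncomputable def mulCLM (m : ℕ) :
    Matrix (Fin m) (Fin m) ℂ →L[ℝ] Matrix (Fin m) (Fin m) ℂ →L[ℝ] Matrix (Fin m) (Fin m) ℂ :=
  LinearMap.toContinuousLinearMap <|
    { toFun := fun A => LinearMap.toContinuousLinearMap (LinearMap.mulLeft ℝ A)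
      map_add' := by intro a b; ext c; simp [add_mul]
      map_smul' := by intro r a; ext c; simp [smul_mul_assoc] }

@[simp] lemma mulCLM_apply {m : ℕ} (A B : Matrix (Fin m) (Fin m) ℂ) : mulCLM m A B = A * B := by
  simp [mulCLM]

/-- Product rule for matrix-valued curves (with the sup-norm instances). -/
lemma HasDerivAt.matmul {m : ℕ} {f g : ℝ → Matrix (Fin m) (Fin m) ℂ}
    {f' g' : Matrix (Fin m) (Fin m) ℂ} {x : ℝ}
    (hf : HasDerivAt f f' x) (hg : HasDerivAt g g' x) :
    HasDerivAt (fun y => f y * g y) (f' * g x + f x * g') x := by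
  have h := (mulCLM m).hasDerivAt_of_bilinear (fun _ => hf) (fun _ => hg)
  have h' : HasDerivAt (fun y => f y * g y) (f x * g' + f' * g x) x := h
  rwa [add_comm] at h'

section alg
variable {m : ℕ} {J X Y A B : Matrix (Fin m) (Fin m) ℂ}

lemma JJ_cancel (hJ : J * J = 1) (X : Matrix (Fin m) (Fin m) ℂ) : J * (J * X) = X := by
  rw [← mul_assoc, hJ, one_mul]

lemma comm_mul_anti (hX : J * X = X * J) (hY : J * Y = -(Y * J)) :
    J * (X * Y) = -(X * Y * J) := by
  rw [← mul_assoc, hX, mul_assoc, hY, mul_neg, mul_assoc]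

lemma anti_mul_comm (hX : J * X = -(X * J)) (hY : J * Y = Y * J) :
    J * (X * Y) = -(X * Y * J) := by
  rw [← mul_assoc, hX, neg_mul, mul_assoc, hY, mul_assoc]

lemma anti_mul_anti (hX : J * X = -(X * J)) (hY : J * Y = -(Y * J)) :
    J * (X * Y) = X * Y * J := by
  rw [← mul_assoc, hX, neg_mul, mul_assoc, hY, mul_neg, neg_neg, mul_assoc]

lemma anti_add (hX : J * X = -(X * J)) (hY : J * Y = -(Y * J)) :
    J * (X + Y) = -((X + Y) * J) := by
  rw [mul_add, hX, hY, ← neg_add, add_mul]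

lemma comm_add (hX : J * X = X * J) (hY : J * Y = Y * J) :
    J * (X + Y) = (X + Y) * J := by
  rw [mul_add, hX, hY, add_mul]

lemma anti_smul (c : ℂ) (hX : J * X = -(X * J)) :
    J * (c • X) = -((c • X) * J) := by
  rw [mul_smul_comm, hX, smul_neg, smul_mul_assoc]

lemma split_zero (hJ : J * J = 1) (hA : J * A = -(A * J)) (hB : J * B = B * J)
    (h : A + B = 0) : A = 0 ∧ B = 0 := by
  have hBA : B = -A := eq_neg_of_add_eq_zero_right h
  have h1 : J * A = A * J := by
    have h' := hB
    rw [hBA, mul_neg, neg_mul, neg_inj] at h'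
    exact h'
  have h5 : A * J = -(A * J) := h1.symm.trans hA
  have h2 : A * J + A * J = 0 := by nth_rewrite 1 [h5]; exact neg_add_cancel _
  have h2' : (2 : ℂ) • (A * J) = 0 := by rw [two_smul]; exact h2
  have h3 : A * J = 0 := by
    rcases smul_eq_zero.mp h2' with h | h
    · exact absurd h (by norm_num)
    · exact h
  have h4 : A = 0 := by
    have h6 := congrArg (· * J) h3
    simpa [mul_assoc, hJ] using h6
  exact ⟨h4, by rw [hBA, h4, neg_zero]⟩

end alg

/-- Decomposition of the equation `-(i/2)[J, φ_t] = φ_xx + (1/2)[φ_x, [J, φ]]`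
into its even and odd parts. -/
theorem NLS_even_odd_decomposition
    {m : ℕ}
    (J : Matrix (Fin m) (Fin m) ℂ) (hJ : J * J = 1)
    (𝒰 𝒟 : ℝ → ℝ → Matrix (Fin m) (Fin m) ℂ)
    (h𝒰smooth : ContDiff ℝ (⊤ : ℕ∞) (fun z : ℝ × ℝ => 𝒰 z.1 z.2))
    (h𝒟smooth : ContDiff ℝ (⊤ : ℕ∞) (fun z : ℝ × ℝ => 𝒟 z.1 z.2))
    (h𝒟comm : ∀ x t : ℝ, J * 𝒟 x t = 𝒟 x t * J)
    (h𝒰anticomm : ∀ x t : ℝ, J * 𝒰 x t = -(𝒰 x t * J))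
    (φ : ℝ → ℝ → Matrix (Fin m) (Fin m) ℂ)
    (hφ : ∀ x t : ℝ, φ x t = J * (𝒟 x t + 𝒰 x t)) :
    (∀ x t : ℝ,
      (-(Complex.I) / 2) • (J * pdt φ x t - pdt φ x t * J)
        = pdx (pdx φ) x t
          + (1 / 2 : ℂ) • (pdx φ x t * (J * φ x t - φ x t * J)
            - (J * φ x t - φ x t * J) * pdx φ x t)) ↔
    ((∀ x t : ℝ,
        Complex.I • (J * pdt 𝒰 x t) + pdx (pdx 𝒰) x t
          + pdx 𝒟 x t * 𝒰 x t + 𝒰 x t * pdx 𝒟 x t = 0) ∧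
     (∀ x t : ℝ,
        pdx (pdx 𝒟) x t = -(pdx (fun y s => 𝒰 y s * 𝒰 y s) x t))) := by
  have hφψ : φ = fun y s => J * (𝒟 y s + 𝒰 y s) := funext fun a => funext fun b => hφ a b
  -- commutation relations for derivatives of 𝒟 and 𝒰
  have hDx' : ∀ x t : ℝ, J * pdx 𝒟 x t = pdx 𝒟 x t * J := by
    intro x t
    have e : (fun y => J * 𝒟 y t) = fun y => 𝒟 y t * J := funext fun y => h𝒟comm y t
    have d1 : HasDerivAt (fun y => J * 𝒟 y t) (J * pdx 𝒟 x t) x := by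
      simpa using (hasDerivAt_const x J).matmul (hasDerivAt_pdx 𝒟 h𝒟smooth x t)
    have d2 : HasDerivAt (fun y => 𝒟 y t * J) (pdx 𝒟 x t * J) x := by
      simpa using (hasDerivAt_pdx 𝒟 h𝒟smooth x t).matmul (hasDerivAt_const x J)
    rw [← d1.deriv, ← d2.deriv, e]
  have hUx' : ∀ x t : ℝ, J * pdx 𝒰 x t = -(pdx 𝒰 x t * J) := by
    intro x t
    have e : (fun y => J * 𝒰 y t) = fun y => -(𝒰 y t * J) := funext fun y => h𝒰anticomm y t
    have d1 : HasDerivAt (fun y => J * 𝒰 y t) (J * pdx 𝒰 x t) x := by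
      simpa using (hasDerivAt_const x J).matmul (hasDerivAt_pdx 𝒰 h𝒰smooth x t)
    have d2 : HasDerivAt (fun y => -(𝒰 y t * J)) (-(pdx 𝒰 x t * J)) x := by
      have h0 := ((hasDerivAt_pdx 𝒰 h𝒰smooth x t).matmul (hasDerivAt_const x J)).fun_neg
      rw [mul_zero, add_zero] at h0; exact h0
    rw [← d1.deriv, ← d2.deriv, e]
  have hDt' : ∀ x t : ℝ, J * pdt 𝒟 x t = pdt 𝒟 x t * J := by
    intro x t
    have e : (fun s => J * 𝒟 x s) = fun s => 𝒟 x s * J := funext fun s => h𝒟comm x s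
    have d1 : HasDerivAt (fun s => J * 𝒟 x s) (J * pdt 𝒟 x t) t := by
      simpa using (hasDerivAt_const t J).matmul (hasDerivAt_pdt 𝒟 h𝒟smooth x t)
    have d2 : HasDerivAt (fun s => 𝒟 x s * J) (pdt 𝒟 x t * J) t := by
      simpa using (hasDerivAt_pdt 𝒟 h𝒟smooth x t).matmul (hasDerivAt_const t J)
    rw [← d1.deriv, ← d2.deriv, e]
  have hUt' : ∀ x t : ℝ, J * pdt 𝒰 x t = -(pdt 𝒰 x t * J) := by
    intro x t
    have e : (fun s => J * 𝒰 x s) = fun s => -(𝒰 x s * J) := funext fun s => h𝒰anticomm x s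
    have d1 : HasDerivAt (fun s => J * 𝒰 x s) (J * pdt 𝒰 x t) t := by
      simpa using (hasDerivAt_const t J).matmul (hasDerivAt_pdt 𝒰 h𝒰smooth x t)
    have d2 : HasDerivAt (fun s => -(𝒰 x s * J)) (-(pdt 𝒰 x t * J)) t := by
      have h0 := ((hasDerivAt_pdt 𝒰 h𝒰smooth x t).matmul (hasDerivAt_const t J)).fun_neg
      rw [mul_zero, add_zero] at h0; exact h0
    rw [← d1.deriv, ← d2.deriv, e]
  have hDxx' : ∀ x t : ℝ, J * pdx (pdx 𝒟) x t = pdx (pdx 𝒟) x t * J := by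
    intro x t
    have e : (fun y => J * pdx 𝒟 y t) = fun y => pdx 𝒟 y t * J := funext fun y => hDx' y t
    have d1 : HasDerivAt (fun y => J * pdx 𝒟 y t) (J * pdx (pdx 𝒟) x t) x := by
      simpa using (hasDerivAt_const x J).matmul
        (hasDerivAt_pdx (pdx 𝒟) (contDiff_pdx 𝒟 h𝒟smooth) x t)
    have d2 : HasDerivAt (fun y => pdx 𝒟 y t * J) (pdx (pdx 𝒟) x t * J) x := by
      simpa using (hasDerivAt_pdx (pdx 𝒟) (contDiff_pdx 𝒟 h𝒟smooth) x t).matmul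
        (hasDerivAt_const x J)
    rw [← d1.deriv, ← d2.deriv, e]
  have hUxx' : ∀ x t : ℝ, J * pdx (pdx 𝒰) x t = -(pdx (pdx 𝒰) x t * J) := by
    intro x t
    have e : (fun y => J * pdx 𝒰 y t) = fun y => -(pdx 𝒰 y t * J) := funext fun y => hUx' y t
    have d1 : HasDerivAt (fun y => J * pdx 𝒰 y t) (J * pdx (pdx 𝒰) x t) x := by
      simpa using (hasDerivAt_const x J).matmul
        (hasDerivAt_pdx (pdx 𝒰) (contDiff_pdx 𝒰 h𝒰smooth) x t)
    have d2 : HasDerivAt (fun y => -(pdx 𝒰 y t * J)) (-(pdx (pdx 𝒰) x t * J)) x := by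
      have h0 := ((hasDerivAt_pdx (pdx 𝒰) (contDiff_pdx 𝒰 h𝒰smooth) x t).matmul
        (hasDerivAt_const x J)).fun_neg
      rw [mul_zero, add_zero] at h0; exact h0
    rw [← d1.deriv, ← d2.deriv, e]
  -- derivatives of ψ = J (𝒟 + 𝒰)
  have hψt : ∀ x t : ℝ, pdt (fun y s => J * (𝒟 y s + 𝒰 y s)) x t
      = J * (pdt 𝒟 x t + pdt 𝒰 x t) := by
    intro x t
    have d : HasDerivAt (fun s => J * (𝒟 x s + 𝒰 x s)) (J * (pdt 𝒟 x t + pdt 𝒰 x t)) t := by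
      simpa using (hasDerivAt_const t J).matmul
        ((hasDerivAt_pdt 𝒟 h𝒟smooth x t).add (hasDerivAt_pdt 𝒰 h𝒰smooth x t))
    exact d.deriv
  have hψx : ∀ x t : ℝ, pdx (fun y s => J * (𝒟 y s + 𝒰 y s)) x t
      = J * (pdx 𝒟 x t + pdx 𝒰 x t) := by
    intro x t
    have d : HasDerivAt (fun y => J * (𝒟 y t + 𝒰 y t)) (J * (pdx 𝒟 x t + pdx 𝒰 x t)) x := by
      simpa using (hasDerivAt_const x J).matmul
        ((hasDerivAt_pdx 𝒟 h𝒟smooth x t).add (hasDerivAt_pdx 𝒰 h𝒰smooth x t))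
    exact d.deriv
  have hψxx : ∀ x t : ℝ, pdx (pdx (fun y s => J * (𝒟 y s + 𝒰 y s))) x t
      = J * (pdx (pdx 𝒟) x t + pdx (pdx 𝒰) x t) := by
    intro x t
    have e : (fun y => pdx (fun y' s => J * (𝒟 y' s + 𝒰 y' s)) y t)
        = fun y => J * (pdx 𝒟 y t + pdx 𝒰 y t) := funext fun y => hψx y t
    have d : HasDerivAt (fun y => J * (pdx 𝒟 y t + pdx 𝒰 y t))
        (J * (pdx (pdx 𝒟) x t + pdx (pdx 𝒰) x t)) x := by
      simpa using (hasDerivAt_const x J).matmul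
        ((hasDerivAt_pdx (pdx 𝒟) (contDiff_pdx 𝒟 h𝒟smooth) x t).add
          (hasDerivAt_pdx (pdx 𝒰) (contDiff_pdx 𝒰 h𝒰smooth) x t))
    show deriv (fun y => pdx (fun y' s => J * (𝒟 y' s + 𝒰 y' s)) y t) x = _
    rw [e]; exact d.deriv
  have hUU : ∀ x t : ℝ, pdx (fun y s => 𝒰 y s * 𝒰 y s) x t
      = pdx 𝒰 x t * 𝒰 x t + 𝒰 x t * pdx 𝒰 x t := by
    intro x t
    exact ((hasDerivAt_pdx 𝒰 h𝒰smooth x t).matmul (hasDerivAt_pdx 𝒰 h𝒰smooth x t)).deriv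
  rw [hφψ]
  have key : ∀ x t : ℝ,
      ((-(Complex.I) / 2) • (J * pdt (fun y s => J * (𝒟 y s + 𝒰 y s)) x t
            - pdt (fun y s => J * (𝒟 y s + 𝒰 y s)) x t * J)
        = pdx (pdx (fun y s => J * (𝒟 y s + 𝒰 y s))) x t
          + (1 / 2 : ℂ) • (pdx (fun y s => J * (𝒟 y s + 𝒰 y s)) x t
              * (J * (J * (𝒟 x t + 𝒰 x t)) - J * (𝒟 x t + 𝒰 x t) * J)
            - (J * (J * (𝒟 x t + 𝒰 x t)) - J * (𝒟 x t + 𝒰 x t) * J)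
              * pdx (fun y s => J * (𝒟 y s + 𝒰 y s)) x t))
      ↔ ((Complex.I • (J * pdt 𝒰 x t) + pdx (pdx 𝒰) x t
          + pdx 𝒟 x t * 𝒰 x t + 𝒰 x t * pdx 𝒟 x t = 0)
        ∧ (pdx (pdx 𝒟) x t = -(pdx (fun y s => 𝒰 y s * 𝒰 y s) x t))) := by
    intro x t
    rw [hψt x t, hψxx x t, hψx x t, hUU x t]
    -- bracket simplifications
    have hbrt : J * (J * (pdt 𝒟 x t + pdt 𝒰 x t)) - J * (pdt 𝒟 x t + pdt 𝒰 x t) * J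
        = pdt 𝒰 x t + pdt 𝒰 x t := by
      have h2 : J * (pdt 𝒟 x t + pdt 𝒰 x t) * J = pdt 𝒟 x t + -(pdt 𝒰 x t) := by
        calc J * (pdt 𝒟 x t + pdt 𝒰 x t) * J
            = (J * pdt 𝒟 x t) * J + (J * pdt 𝒰 x t) * J := by rw [mul_add, add_mul]
          _ = pdt 𝒟 x t + -(pdt 𝒰 x t) := by
              rw [hDt' x t, hUt' x t, mul_assoc (pdt 𝒟 x t), hJ, mul_one, neg_mul,
                mul_assoc (pdt 𝒰 x t), hJ, mul_one]
      rw [JJ_cancel hJ, h2]; abel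
    have hbrφ : J * (J * (𝒟 x t + 𝒰 x t)) - J * (𝒟 x t + 𝒰 x t) * J
        = 𝒰 x t + 𝒰 x t := by
      have h2 : J * (𝒟 x t + 𝒰 x t) * J = 𝒟 x t + -(𝒰 x t) := by
        calc J * (𝒟 x t + 𝒰 x t) * J
            = (J * 𝒟 x t) * J + (J * 𝒰 x t) * J := by rw [mul_add, add_mul]
          _ = 𝒟 x t + -(𝒰 x t) := by
              rw [h𝒟comm x t, h𝒰anticomm x t, mul_assoc (𝒟 x t), hJ, mul_one, neg_mul,
                mul_assoc (𝒰 x t), hJ, mul_one]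
      rw [JJ_cancel hJ, h2]; abel
    rw [hbrt, hbrφ]
    -- left-hand side
    have hL : (-(Complex.I) / 2) • (pdt 𝒰 x t + pdt 𝒰 x t) = (-Complex.I) • pdt 𝒰 x t := by
      rw [smul_add, ← add_smul]
      congr 1
      ring
    rw [hL]
    -- right-hand side commutator
    have hUJ : 𝒰 x t * J = -(J * 𝒰 x t) := by rw [h𝒰anticomm x t, neg_neg]
    have hC : (J * (pdx 𝒟 x t + pdx 𝒰 x t)) * 𝒰 x t - 𝒰 x t * (J * (pdx 𝒟 x t + pdx 𝒰 x t))
        = J * ((pdx 𝒟 x t * 𝒰 x t + pdx 𝒰 x t * 𝒰 x t)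
            + (𝒰 x t * pdx 𝒟 x t + 𝒰 x t * pdx 𝒰 x t)) := by
      have e1 : (J * (pdx 𝒟 x t + pdx 𝒰 x t)) * 𝒰 x t
          = J * (pdx 𝒟 x t * 𝒰 x t + pdx 𝒰 x t * 𝒰 x t) := by
        rw [mul_assoc, add_mul]
      have e2 : 𝒰 x t * (J * (pdx 𝒟 x t + pdx 𝒰 x t))
          = -(J * (𝒰 x t * pdx 𝒟 x t + 𝒰 x t * pdx 𝒰 x t)) := by
        calc 𝒰 x t * (J * (pdx 𝒟 x t + pdx 𝒰 x t))
            = (𝒰 x t * J) * (pdx 𝒟 x t + pdx 𝒰 x t) := by rw [mul_assoc]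
          _ = -(J * 𝒰 x t) * (pdx 𝒟 x t + pdx 𝒰 x t) := by rw [hUJ]
          _ = -(J * (𝒰 x t * (pdx 𝒟 x t + pdx 𝒰 x t))) := by rw [neg_mul, mul_assoc]
          _ = -(J * (𝒰 x t * pdx 𝒟 x t + 𝒰 x t * pdx 𝒰 x t)) := by rw [mul_add]
      rw [e1, e2, sub_neg_eq_add, ← mul_add]
    have hhalf : (1 / 2 : ℂ) • ((J * (pdx 𝒟 x t + pdx 𝒰 x t)) * (𝒰 x t + 𝒰 x t)
          - (𝒰 x t + 𝒰 x t) * (J * (pdx 𝒟 x t + pdx 𝒰 x t)))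
        = J * ((pdx 𝒟 x t * 𝒰 x t + pdx 𝒰 x t * 𝒰 x t)
            + (𝒰 x t * pdx 𝒟 x t + 𝒰 x t * pdx 𝒰 x t)) := by
      have e3 : (J * (pdx 𝒟 x t + pdx 𝒰 x t)) * (𝒰 x t + 𝒰 x t)
            - (𝒰 x t + 𝒰 x t) * (J * (pdx 𝒟 x t + pdx 𝒰 x t))
          = ((J * (pdx 𝒟 x t + pdx 𝒰 x t)) * 𝒰 x t
              - 𝒰 x t * (J * (pdx 𝒟 x t + pdx 𝒰 x t)))
            + ((J * (pdx 𝒟 x t + pdx 𝒰 x t)) * 𝒰 x t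
              - 𝒰 x t * (J * (pdx 𝒟 x t + pdx 𝒰 x t))) := by
        rw [mul_add, add_mul]; abel
      rw [e3, ← two_smul ℂ, smul_smul]
      norm_num
      exact hC
    rw [hhalf, ← mul_add]
    -- now pure algebra
    have hJUta : J * (J * pdt 𝒰 x t) = -((J * pdt 𝒰 x t) * J) := by
      have hUtJ : pdt 𝒰 x t * J = -(J * pdt 𝒰 x t) := by rw [hUt' x t, neg_neg]
      have hs : (J * pdt 𝒰 x t) * J = -(pdt 𝒰 x t) := by
        rw [mul_assoc, hUtJ, mul_neg, JJ_cancel hJ]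
      rw [JJ_cancel hJ, hs, neg_neg]
    have hAanti : J * (Complex.I • (J * pdt 𝒰 x t) + pdx (pdx 𝒰) x t
          + pdx 𝒟 x t * 𝒰 x t + 𝒰 x t * pdx 𝒟 x t)
        = -((Complex.I • (J * pdt 𝒰 x t) + pdx (pdx 𝒰) x t
          + pdx 𝒟 x t * 𝒰 x t + 𝒰 x t * pdx 𝒟 x t) * J) :=
      anti_add (anti_add (anti_add (anti_smul Complex.I hJUta) (hUxx' x t))
        (comm_mul_anti (hDx' x t) (h𝒰anticomm x t)))
        (anti_mul_comm (h𝒰anticomm x t) (hDx' x t))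
    have hBcomm : J * (pdx (pdx 𝒟) x t + (pdx 𝒰 x t * 𝒰 x t + 𝒰 x t * pdx 𝒰 x t))
        = (pdx (pdx 𝒟) x t + (pdx 𝒰 x t * 𝒰 x t + 𝒰 x t * pdx 𝒰 x t)) * J :=
      comm_add (hDxx' x t)
        (comm_add (anti_mul_anti (hUx' x t) (h𝒰anticomm x t))
          (anti_mul_anti (h𝒰anticomm x t) (hUx' x t)))
    constructor
    · intro h
      have h' : (-Complex.I) • (J * pdt 𝒰 x t)
          = (pdx (pdx 𝒟) x t + pdx (pdx 𝒰) x t)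
            + ((pdx 𝒟 x t * 𝒰 x t + pdx 𝒰 x t * 𝒰 x t)
              + (𝒰 x t * pdx 𝒟 x t + 𝒰 x t * pdx 𝒰 x t)) := by
        have h2 := congrArg (fun X => J * X) h
        rw [mul_smul_comm, JJ_cancel hJ] at h2
        exact h2
      have hsum : (Complex.I • (J * pdt 𝒰 x t) + pdx (pdx 𝒰) x t
            + pdx 𝒟 x t * 𝒰 x t + 𝒰 x t * pdx 𝒟 x t)
          + (pdx (pdx 𝒟) x t + (pdx 𝒰 x t * 𝒰 x t + 𝒰 x t * pdx 𝒰 x t)) = 0 := by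
        have hab : (Complex.I • (J * pdt 𝒰 x t) + pdx (pdx 𝒰) x t
              + pdx 𝒟 x t * 𝒰 x t + 𝒰 x t * pdx 𝒟 x t)
            + (pdx (pdx 𝒟) x t + (pdx 𝒰 x t * 𝒰 x t + 𝒰 x t * pdx 𝒰 x t))
            = Complex.I • (J * pdt 𝒰 x t)
              + ((pdx (pdx 𝒟) x t + pdx (pdx 𝒰) x t)
                + ((pdx 𝒟 x t * 𝒰 x t + pdx 𝒰 x t * 𝒰 x t)
                  + (𝒰 x t * pdx 𝒟 x t + 𝒰 x t * pdx 𝒰 x t))) := by abel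
        rw [hab, ← h', neg_smul, add_neg_cancel]
      obtain ⟨hA0, hB0⟩ := split_zero hJ hAanti hBcomm hsum
      exact ⟨hA0, eq_neg_of_add_eq_zero_left hB0⟩
    · rintro ⟨h1, h2⟩
      have hB0 : pdx (pdx 𝒟) x t + (pdx 𝒰 x t * 𝒰 x t + 𝒰 x t * pdx 𝒰 x t) = 0 := by
        rw [h2]; exact neg_add_cancel _
      have hsum : Complex.I • (J * pdt 𝒰 x t)
          + ((pdx (pdx 𝒟) x t + pdx (pdx 𝒰) x t)
            + ((pdx 𝒟 x t * 𝒰 x t + pdx 𝒰 x t * 𝒰 x t)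
              + (𝒰 x t * pdx 𝒟 x t + 𝒰 x t * pdx 𝒰 x t))) = 0 := by
        have hab : Complex.I • (J * pdt 𝒰 x t)
            + ((pdx (pdx 𝒟) x t + pdx (pdx 𝒰) x t)
              + ((pdx 𝒟 x t * 𝒰 x t + pdx 𝒰 x t * 𝒰 x t)
                + (𝒰 x t * pdx 𝒟 x t + 𝒰 x t * pdx 𝒰 x t)))
            = (Complex.I • (J * pdt 𝒰 x t) + pdx (pdx 𝒰) x t
              + pdx 𝒟 x t * 𝒰 x t + 𝒰 x t * pdx 𝒟 x t)
            + (pdx (pdx 𝒟) x t + (pdx 𝒰 x t * 𝒰 x t + 𝒰 x t * pdx 𝒰 x t)) := by abel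
        rw [hab, h1, hB0, add_zero]
      have hS : (pdx (pdx 𝒟) x t + pdx (pdx 𝒰) x t)
            + ((pdx 𝒟 x t * 𝒰 x t + pdx 𝒰 x t * 𝒰 x t)
              + (𝒰 x t * pdx 𝒟 x t + 𝒰 x t * pdx 𝒰 x t))
          = -(Complex.I • (J * pdt 𝒰 x t)) := eq_neg_of_add_eq_zero_right hsum
      rw [hS, mul_neg, mul_smul_comm, JJ_cancel hJ, ← neg_smul]
  constructor
  · intro h
    exact ⟨fun x t => ((key x t).mp (h x t)).1, fun x t => ((key x t).mp (h x t)).2⟩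
  · intro h x t
    exact (key x t).mpr ⟨h.1 x t, h.2 x t⟩
end

section
/- Let m, n be positive integers, let s₁, …, s_n ∈ ℂ with Re(s_j) > 0 for all j, and let v₁, …, v_n ∈ ℂᵐ be unit vectors (‖v_j‖ = 1 with respect to the Hermitian inner product). Define k_{jl} = (v_j† v_l)/(s_j + conj(s_l)); in particular k_{ii} = 1/(2 Re(s_i)). Fix i with 1 ≤ i ≤ n and assume the (i−1)×(i−1) matrix K₁ = (k_{jl})_{1 ≤ j,l ≤ i−1} is invertible. Then the vector w = v_i − Σ_{j,l=1}^{i−1} v_j (K₁⁻¹)_{jl} k_{li} satisfies ‖w‖² = (s_i + conj(s_i)) · (k_{ii} − Σ_{j,l=1}^{i−1} k_{ij} (K₁⁻¹)_{jl} k_{li}) = (L₂)_{ii} / k_{ii}, where (L₂)_{ii} = k_{ii} − Σ_{j,l=1}^{i−1} k_{ij} (K₁⁻¹)_{jl} k_{li} is the (i,i)-entry of the Schur complement of K₁ in (k_{jl})_{1 ≤ j,l ≤ n}. -/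
open Matrix ComplexConjugate

/-- Asymptotic normalisation identity (Hermitian reduction, continuous NLS case):
`‖w‖² = (s_i + conj s_i) · (L₂)_{ii} = (L₂)_{ii} / k_{ii}`, where `(L₂)_{ii}` is the
`(i,i)` entry of the Schur complement of `K₁`. -/
theorem hermitian_asymptotic_normalisation
    {m n : ℕ} (hm : 0 < m) (hn : 0 < n)
    (s : Fin n → ℂ)
    (hre : ∀ j : Fin n, 0 < (s j).re)
    (v : Fin n → Fin m → ℂ)
    (hunit : ∀ j : Fin n, ∑ a : Fin m, (starRingEnd ℂ) (v j a) * v j a = 1)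
    (k : Fin n → Fin n → ℂ)
    (hk : ∀ j l : Fin n,
      k j l = (∑ a : Fin m, (starRingEnd ℂ) (v j a) * v l a) / (s j + (starRingEnd ℂ) (s l)))
    (i : Fin n)
    (K1 : Matrix (Fin (i : ℕ)) (Fin (i : ℕ)) ℂ)
    (hK1 : ∀ a b : Fin (i : ℕ),
      K1 a b = k (Fin.castLE i.isLt.le a) (Fin.castLE i.isLt.le b))
    (hK1inv : IsUnit K1)
    (w : Fin m → ℂ)
    (hw : ∀ a : Fin m,
      w a = v i a - ∑ j : Fin (i : ℕ), ∑ l : Fin (i : ℕ),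
        K1⁻¹ j l * k (Fin.castLE i.isLt.le l) i * v (Fin.castLE i.isLt.le j) a) :
    (∑ a : Fin m, (starRingEnd ℂ) (w a) * w a)
      = (s i + (starRingEnd ℂ) (s i))
        * (k i i - ∑ j : Fin (i : ℕ), ∑ l : Fin (i : ℕ),
            k i (Fin.castLE i.isLt.le j) * K1⁻¹ j l * k (Fin.castLE i.isLt.le l) i) ∧
    (∑ a : Fin m, (starRingEnd ℂ) (w a) * w a)
      = (k i i - ∑ j : Fin (i : ℕ), ∑ l : Fin (i : ℕ),
            k i (Fin.castLE i.isLt.le j) * K1⁻¹ j l * k (Fin.castLE i.isLt.le l) i)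
        / k i i := by
  classical
  set e : Fin (i : ℕ) → Fin n := Fin.castLE i.isLt.le with he
  set c : Fin (i : ℕ) → ℂ := fun j => ∑ l, K1⁻¹ j l * k (e l) i with hc
  set G : Fin n → Fin n → ℂ := fun a b => ∑ x, conj (v a x) * v b x with hGdef
  set σ : ℂ := ∑ j, ∑ l, k i (e j) * K1⁻¹ j l * k (e l) i with hσ
  -- denominators are nonzero
  have hne : ∀ a b : Fin n, s a + conj (s b) ≠ 0 := by
    intro a b h
    have h2 : (s a + conj (s b)).re = 0 := by rw [h]; simp
    have := hre a; have := hre b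
    simp [Complex.add_re, Complex.conj_re] at h2
    linarith
  -- Gram entries
  have hG : ∀ a b : Fin n, G a b = k a b * (s a + conj (s b)) := by
    intro a b
    rw [hk a b, div_mul_cancel₀ _ (hne a b)]
  -- k is Hermitian
  have hkherm : ∀ a b : Fin n, conj (k a b) = k b a := by
    intro a b
    rw [hk a b, hk b a, map_div₀, map_sum, map_add]
    simp only [_root_.map_mul, Complex.conj_conj]
    rw [add_comm]
    congr 1
    exact Finset.sum_congr rfl fun x _ => mul_comm _ _
  -- K1 is Hermitian, hence K1⁻¹ is Hermitian
  have hK1herm : K1ᴴ = K1 := by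
    ext a b
    rw [Matrix.conjTranspose_apply, hK1, hK1]
    exact hkherm _ _
  have hdet : IsUnit K1.det := (Matrix.isUnit_iff_isUnit_det K1).mp hK1inv
  have hinvherm : ∀ a b : Fin (i : ℕ), conj (K1⁻¹ a b) = K1⁻¹ b a := by
    intro a b
    have h1 : (K1⁻¹)ᴴ = K1⁻¹ := by
      rw [Matrix.conjTranspose_nonsing_inv, hK1herm]
    have := congrFun (congrFun h1 b) a
    rwa [Matrix.conjTranspose_apply] at this
  have hKKinv : ∀ a b : Fin (i : ℕ), (∑ x, K1 a x * K1⁻¹ x b) = if a = b then 1 else 0 := by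
    intro a b
    have := congrFun (congrFun (Matrix.mul_nonsing_inv K1 hdet) a) b
    rwa [Matrix.mul_apply, Matrix.one_apply] at this
  have hKinvK : ∀ a b : Fin (i : ℕ), (∑ x, K1⁻¹ a x * K1 x b) = if a = b then 1 else 0 := by
    intro a b
    have := congrFun (congrFun (Matrix.nonsing_inv_mul K1 hdet) a) b
    rwa [Matrix.mul_apply, Matrix.one_apply] at this
  -- rewrite w using c
  have hw' : ∀ a : Fin m, w a = v i a - ∑ j, c j * v (e j) a := by
    intro a
    rw [hw a]
    congr 1
    refine Finset.sum_congr rfl fun j _ => ?_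
    rw [hc, Finset.sum_mul]
  -- conjugate of c
  have hcconj : ∀ j : Fin (i : ℕ), conj (c j) = ∑ l, K1⁻¹ l j * k i (e l) := by
    intro j
    rw [hc, map_sum]
    refine Finset.sum_congr rfl fun l _ => ?_
    rw [_root_.map_mul, hinvherm, hkherm]
  -- expansion of the norm
  have hmul4 : ∀ X A Y B : ℂ, (X - A) * (Y - B) = X * Y - X * B - A * Y + A * B :=
    fun X A Y B => by ring
  have expand : (∑ a, conj (w a) * w a)
      = G i i - (∑ j', c j' * G i (e j')) - (∑ j, conj (c j) * G (e j) i)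
        + ∑ j, ∑ j', conj (c j) * c j' * G (e j) (e j') := by
    have hpt : ∀ a : Fin m, conj (w a) * w a
        = conj (v i a) * v i a
          - (∑ j', c j' * (conj (v i a) * v (e j') a))
          - (∑ j, conj (c j) * (conj (v (e j) a) * v i a))
          + ∑ j, ∑ j', conj (c j) * c j' * (conj (v (e j) a) * v (e j') a) := by
      intro a
      rw [hw' a]
      simp only [map_sub, map_sum, _root_.map_mul]
      rw [hmul4]
      have hXB : conj (v i a) * (∑ j', c j' * v (e j') a)
          = ∑ j', c j' * (conj (v i a) * v (e j') a) := by
        rw [Finset.mul_sum]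
        exact Finset.sum_congr rfl fun j' _ => by ring
      have hAY : (∑ j, conj (c j) * conj (v (e j) a)) * v i a
          = ∑ j, conj (c j) * (conj (v (e j) a) * v i a) := by
        rw [Finset.sum_mul]
        exact Finset.sum_congr rfl fun j _ => by ring
      have hAB : (∑ j, conj (c j) * conj (v (e j) a)) * (∑ j', c j' * v (e j') a)
          = ∑ j, ∑ j', conj (c j) * c j' * (conj (v (e j) a) * v (e j') a) := by
        rw [Finset.sum_mul_sum]
        exact Finset.sum_congr rfl fun j _ => Finset.sum_congr rfl fun j' _ => by ring
      rw [hXB, hAY, hAB]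
    have hA : (∑ a, ∑ j', c j' * (conj (v i a) * v (e j') a))
        = ∑ j', c j' * G i (e j') := by
      rw [Finset.sum_comm]
      exact Finset.sum_congr rfl fun j' _ => by rw [← Finset.mul_sum]
    have hB : (∑ a, ∑ j, conj (c j) * (conj (v (e j) a) * v i a))
        = ∑ j, conj (c j) * G (e j) i := by
      rw [Finset.sum_comm]
      exact Finset.sum_congr rfl fun j _ => by rw [← Finset.mul_sum]
    have hC : (∑ a, ∑ j, ∑ j', conj (c j) * c j' * (conj (v (e j) a) * v (e j') a))
        = ∑ j, ∑ j', conj (c j) * c j' * G (e j) (e j') := by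
      rw [Finset.sum_comm]
      refine Finset.sum_congr rfl fun j _ => ?_
      rw [Finset.sum_comm]
      exact Finset.sum_congr rfl fun j' _ => by rw [← Finset.mul_sum]
    calc (∑ a, conj (w a) * w a)
        = ∑ a, (conj (v i a) * v i a
          - (∑ j', c j' * (conj (v i a) * v (e j') a))
          - (∑ j, conj (c j) * (conj (v (e j) a) * v i a))
          + ∑ j, ∑ j', conj (c j) * c j' * (conj (v (e j) a) * v (e j') a)) :=
          Finset.sum_congr rfl fun a _ => hpt a
      _ = G i i - (∑ j', c j' * G i (e j')) - (∑ j, conj (c j) * G (e j) i)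
          + ∑ j, ∑ j', conj (c j) * c j' * G (e j) (e j') := by
          rw [Finset.sum_add_distrib, Finset.sum_sub_distrib, Finset.sum_sub_distrib,
            hA, hB, hC]
  -- cancellation identities
  have hKc : ∀ j : Fin (i : ℕ), (∑ j', K1 j j' * c j') = k (e j) i := by
    intro j
    calc (∑ j', K1 j j' * c j')
        = ∑ j', ∑ l, (K1 j j' * K1⁻¹ j' l) * k (e l) i := by
          refine Finset.sum_congr rfl fun j' _ => ?_
          rw [hc, Finset.mul_sum]
          exact Finset.sum_congr rfl fun l _ => by ring
      _ = ∑ l, (∑ j', K1 j j' * K1⁻¹ j' l) * k (e l) i := by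
          rw [Finset.sum_comm]
          exact Finset.sum_congr rfl fun l _ => by rw [Finset.sum_mul]
      _ = k (e j) i := by
          simp only [hKKinv]
          simp
  have hcK : ∀ j' : Fin (i : ℕ), (∑ j, conj (c j) * K1 j j') = k i (e j') := by
    intro j'
    calc (∑ j, conj (c j) * K1 j j')
        = ∑ j, ∑ l, k i (e l) * (K1⁻¹ l j * K1 j j') := by
          refine Finset.sum_congr rfl fun j _ => ?_
          rw [hcconj, Finset.sum_mul]
          exact Finset.sum_congr rfl fun l _ => by ring
      _ = ∑ l, k i (e l) * (∑ j, K1⁻¹ l j * K1 j j') := by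
          rw [Finset.sum_comm]
          exact Finset.sum_congr rfl fun l _ => by rw [Finset.mul_sum]
      _ = k i (e j') := by
          simp only [hKinvK]
          simp
  -- σ in two forms
  have hσ1 : (∑ j', c j' * k i (e j')) = σ := by
    rw [hσ]
    refine Finset.sum_congr rfl fun j' _ => ?_
    rw [hc, Finset.sum_mul]
    exact Finset.sum_congr rfl fun l _ => by ring
  have hσ2 : (∑ j, conj (c j) * k (e j) i) = σ := by
    rw [hσ, Finset.sum_comm]
    refine Finset.sum_congr rfl fun j _ => ?_
    rw [hcconj, Finset.sum_mul]
    exact Finset.sum_congr rfl fun l _ => by ring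
  -- the three sums evaluated
  have hS1 : (∑ j', c j' * G i (e j'))
      = s i * (∑ j', c j' * k i (e j')) + ∑ j', c j' * k i (e j') * conj (s (e j')) := by
    rw [Finset.mul_sum, ← Finset.sum_add_distrib]
    refine Finset.sum_congr rfl fun j' _ => ?_
    rw [hG]; ring
  have hS2 : (∑ j, conj (c j) * G (e j) i)
      = (∑ j, conj (c j) * k (e j) i * s (e j))
        + conj (s i) * (∑ j, conj (c j) * k (e j) i) := by
    rw [Finset.mul_sum, ← Finset.sum_add_distrib]
    refine Finset.sum_congr rfl fun j _ => ?_
    rw [hG]; ring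
  have hS3 : (∑ j, ∑ j', conj (c j) * c j' * G (e j) (e j'))
      = (∑ j, conj (c j) * k (e j) i * s (e j))
        + ∑ j', c j' * k i (e j') * conj (s (e j')) := by
    calc (∑ j, ∑ j', conj (c j) * c j' * G (e j) (e j'))
        = ∑ j, ∑ j', (conj (c j) * s (e j) * (K1 j j' * c j')
            + c j' * conj (s (e j')) * (conj (c j) * K1 j j')) := by
          refine Finset.sum_congr rfl fun j _ => Finset.sum_congr rfl fun j' _ => ?_
          rw [hG, ← hK1 j j']
          ring
      _ = (∑ j, ∑ j', conj (c j) * s (e j) * (K1 j j' * c j'))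
          + ∑ j, ∑ j', c j' * conj (s (e j')) * (conj (c j) * K1 j j') := by
          simp only [Finset.sum_add_distrib]
      _ = (∑ j, conj (c j) * k (e j) i * s (e j))
          + ∑ j', c j' * k i (e j') * conj (s (e j')) := by
          congr 1
          · refine Finset.sum_congr rfl fun j _ => ?_
            rw [← Finset.mul_sum, hKc j]; ring
          · rw [Finset.sum_comm]
            refine Finset.sum_congr rfl fun j' _ => ?_
            rw [← Finset.mul_sum, hcK j']; ring
  have hkii : k i i * (s i + conj (s i)) = 1 := by
    rw [← hG i i, hGdef]
    exact hunit i
  have hki0 : k i i ≠ 0 := left_ne_zero_of_mul_eq_one hkii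
  have main : (∑ a, conj (w a) * w a) = (s i + conj (s i)) * (k i i - σ) := by
    rw [expand, hS1, hS2, hS3, hσ1, hσ2, hG i i]
    ring
  refine ⟨main, ?_⟩
  rw [main, eq_div_iff hki0]
  linear_combination (k i i - σ) * hkii
end
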